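/- arXiv:2302.04802 — 2 statements merged into one kernel-verified Lean document; each statement's English description precedes it below -/
import Mathlib

section
/- Let f_c, f_m, c₀, d, r be positive real numbers, let φ ∈ (−1, 1), set η = f_c/f_m, and assume |η·φ| < 1. Define ζ = (1−φ²)/(2r), the spatial direction φ̄ = η·φ, the spatial range r̄ = (1 − η²φ²)·r / (η·(1 − φ²)), and ζ̄ = (1 − φ̄²)/(2r̄). Then: (i) for every natural number n, f_m·(n·d·φ̄ − n²·d²·ζ̄) = f_c·(n·d·φ − n²·d²·ζ); and (ii) for every N ≥ 1, the normalized near-field array gain G = (1/N²)·|∑_{n=0}^{N-1} exp((2πi/c₀)·(f_m·(n·d·φ̄ − n²·d²·ζ̄) − f_c·(n·d·φ − n²·d²·ζ)))|² equals 1, its maximum possible value over all choices of (φ̄, ζ̄). -/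
open Real Complex Finset

/-! The beam at subcarrier `m` carries the phase `f_m (n d φ̄ − n² d² ζ̄)`. With `φ̄ = η φ` it matches
the physical phase `f_c (n d φ − n² d² ζ)` for every `n` exactly when `ζ̄ = η ζ`, and the choice of
`r̄` is precisely the one that makes `ζ̄ = η ζ`. Then every term of the gain sum is `exp 0 = 1`, so
the normalized gain is `N² / N² = 1`, while the triangle inequality bounds it by `1` for any beam. -/

/-- The normalized near-field array gain
`G = (1/N²)·|∑_{n=0}^{N-1} exp((2πi/c₀)·(f_m(n d φ̄ − n² d² ζ̄) − f_c(n d φ − n² d² ζ)))|²`. -/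
noncomputable def nfGain (c0 fc fm d φ ζ φbar ζbar : ℝ) (N : ℕ) : ℝ :=
  (1 / (N : ℝ) ^ 2) *
    ‖∑ n ∈ Finset.range N,
      Complex.exp ((2 * π * Complex.I / (c0 : ℂ)) *
        ((fm * ((n : ℝ) * d * φbar - (n : ℝ) ^ 2 * d ^ 2 * ζbar) -
          fc * ((n : ℝ) * d * φ - (n : ℝ) ^ 2 * d ^ 2 * ζ) : ℝ) : ℂ))‖ ^ 2

lemma norm_sq_sum_div_card_sq_le_one {ι E : Type*} [SeminormedAddCommGroup E] (s : Finset ι)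
    (f : ι → E) (hf : ∀ i ∈ s, ‖f i‖ ≤ 1) :
    1 / (#s : ℝ) ^ 2 * ‖∑ i ∈ s, f i‖ ^ 2 ≤ 1 := by
  have hsum : ‖∑ i ∈ s, f i‖ ≤ #s :=
    calc ‖∑ i ∈ s, f i‖ ≤ ∑ i ∈ s, ‖f i‖ := norm_sum_le s f
      _ ≤ ∑ _i ∈ s, (1 : ℝ) := sum_le_sum hf
      _ = #s := by simp
  rw [one_div_mul_eq_div, ← div_pow]
  exact pow_le_one₀ (by positivity) (div_le_one_of_le₀ hsum (Nat.cast_nonneg _))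

lemma norm_exp_two_pi_I_div_mul_ofReal (c x : ℝ) :
    ‖Complex.exp (2 * π * Complex.I / (c : ℂ) * (x : ℂ))‖ = 1 := by
  have hre : (2 * π * Complex.I / (c : ℂ) * (x : ℂ)).re = 0 := by
    simp [Complex.div_re, Complex.mul_re, Complex.mul_im]
  rw [Complex.norm_exp, hre, Real.exp_zero]

lemma nfGain_le_one (c0 fc fm d φ ζ φbar ζbar : ℝ) (N : ℕ) :
    nfGain c0 fc fm d φ ζ φbar ζbar N ≤ 1 := by
  have h := norm_sq_sum_div_card_sq_le_one (range N) _
    fun n _ => (norm_exp_two_pi_I_div_mul_ofReal c0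
      (fm * ((n : ℝ) * d * φbar - (n : ℝ) ^ 2 * d ^ 2 * ζbar) -
        fc * ((n : ℝ) * d * φ - (n : ℝ) ^ 2 * d ^ 2 * ζ))).le
  rwa [card_range] at h

lemma nfGain_eq_one_of_phase_eq {c0 fc fm d φ ζ φbar ζbar : ℝ}
    (hphase : ∀ n : ℕ, fm * ((n : ℝ) * d * φbar - (n : ℝ) ^ 2 * d ^ 2 * ζbar) =
      fc * ((n : ℝ) * d * φ - (n : ℝ) ^ 2 * d ^ 2 * ζ))
    {N : ℕ} (hN : N ≠ 0) :
    nfGain c0 fc fm d φ ζ φbar ζbar N = 1 := by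
  have hN' : (N : ℝ) ≠ 0 := Nat.cast_ne_zero.mpr hN
  simp [nfGain, hphase, hN']

lemma div_two_mul_mul_div_cancel_left₀ {a : ℝ} (r b : ℝ) (ha : a ≠ 0) :
    a / (2 * (a * r / b)) = b / (2 * r) := by
  rw [mul_div_assoc, mul_left_comm, ← div_div, div_self ha, one_div, mul_inv, inv_div]
  ring

lemma spatial_curvature_eq_mul {η φ : ℝ} (r : ℝ) (hηφ : (η * φ) ^ 2 < 1) :
    (1 - (η * φ) ^ 2) / (2 * ((1 - η ^ 2 * φ ^ 2) * r / (η * (1 - φ ^ 2)))) =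
      η * ((1 - φ ^ 2) / (2 * r)) := by
  rw [← mul_pow, div_two_mul_mul_div_cancel_left₀ r _ (sub_pos.mpr hηφ).ne', mul_div_assoc]

theorem near_field_beam_split_focus_general (fc fm c0 d r : ℝ)
    (hfm : 0 < fm)
    (φ : ℝ) (hηφ : |(fc / fm) * φ| < 1)
    (η ζ φbar rbar ζbar : ℝ)
    (hη : η = fc / fm) (hζ : ζ = (1 - φ ^ 2) / (2 * r)) (hφbar : φbar = η * φ)
    (hrbar : rbar = (1 - η ^ 2 * φ ^ 2) * r / (η * (1 - φ ^ 2)))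
    (hζbar : ζbar = (1 - φbar ^ 2) / (2 * rbar)) :
    (∀ n : ℕ,
        fm * ((n : ℝ) * d * φbar - (n : ℝ) ^ 2 * d ^ 2 * ζbar) =
          fc * ((n : ℝ) * d * φ - (n : ℝ) ^ 2 * d ^ 2 * ζ)) ∧
    ∀ N : ℕ, 1 ≤ N →
      nfGain c0 fc fm d φ ζ φbar ζbar N = 1 ∧
      ∀ φbar' ζbar' : ℝ, nfGain c0 fc fm d φ ζ φbar' ζbar' N ≤ 1 := by
  subst hη
  have hζbar_eq : ζbar = fc / fm * ζ := by
    rw [hζbar, hφbar, hrbar, hζ]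
    exact spatial_curvature_eq_mul r ((sq_lt_one_iff_abs_lt_one _).mpr hηφ)
  have hphase : ∀ n : ℕ, fm * ((n : ℝ) * d * φbar - (n : ℝ) ^ 2 * d ^ 2 * ζbar) =
      fc * ((n : ℝ) * d * φ - (n : ℝ) ^ 2 * d ^ 2 * ζ) := fun n => by
    rw [hζbar_eq, hφbar]
    linear_combination ((n : ℝ) * d * φ - (n : ℝ) ^ 2 * d ^ 2 * ζ) * mul_div_cancel₀ fc hfm.ne'
  exact ⟨hphase, fun N hN =>
    ⟨nfGain_eq_one_of_phase_eq hphase (Nat.one_le_iff_ne_zero.mp hN),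
      fun φbar' ζbar' => nfGain_le_one c0 fc fm d φ ζ φbar' ζbar' N⟩⟩

/-- Forward direction of Theorem 1: with spatial direction `φ̄ = η φ` and spatial range
`r̄ = (1 − η²φ²) r / (η (1 − φ²))` (hence `ζ̄ = (1 − φ̄²)/(2 r̄)`), the per-antenna
phases match exactly, and the normalized near-field array gain equals `1`, which is its
maximum possible value over all choices of `(φ̄', ζ̄')`. -/
theorem near_field_beam_split_focus (fc fm c0 d r : ℝ)
    (hfc : 0 < fc) (hfm : 0 < fm) (hc0 : 0 < c0) (hd : 0 < d) (hr : 0 < r)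
    (φ : ℝ) (hφ : φ ∈ Set.Ioo (-1 : ℝ) 1) (hηφ : |(fc / fm) * φ| < 1)
    (η ζ φbar rbar ζbar : ℝ)
    (hη : η = fc / fm) (hζ : ζ = (1 - φ ^ 2) / (2 * r)) (hφbar : φbar = η * φ)
    (hrbar : rbar = (1 - η ^ 2 * φ ^ 2) * r / (η * (1 - φ ^ 2)))
    (hζbar : ζbar = (1 - φbar ^ 2) / (2 * rbar)) :
    (∀ n : ℕ,
        fm * ((n : ℝ) * d * φbar - (n : ℝ) ^ 2 * d ^ 2 * ζbar) =
          fc * ((n : ℝ) * d * φ - (n : ℝ) ^ 2 * d ^ 2 * ζ)) ∧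
    ∀ N : ℕ, 1 ≤ N →
      nfGain c0 fc fm d φ ζ φbar ζbar N = 1 ∧
      ∀ φbar' ζbar' : ℝ, nfGain c0 fc fm d φ ζ φbar' ζbar' N ≤ 1 :=
  near_field_beam_split_focus_general fc fm c0 d r hfm φ hηφ η ζ φbar rbar ζbar hη hζ hφbar hrbar
    hζbar
end

section
/- Let N be a natural number with N ≥ 3 and let α, β be real numbers with |α + β| < 1 and |β| < 1/2. If the normalized array gain (1/N²)·|∑_{n=0}^{N-1} exp(2πi·(α·n + β·n²))|² equals 1, then α = 0 and β = 0. -/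
/-!
Gain `1` means `‖∑ uₙ‖ = N` for the unit phasors `uₙ = exp (2πi (αn + βn²))`, i.e. equality in
the triangle inequality, which forces all `uₙ` to equal `u₀ = 1`. So every phase `αn + βn²`
(`n < N`) is an integer; `n = 1, 2` give `α + β ∈ ℤ` and `2β ∈ ℤ`, and the bounds
`|α + β| < 1`, `|2β| < 1` make both zero.
-/

open Real Complex Finset

theorem eq_of_norm_sum_eq_card {ι E : Type*} [NormedAddCommGroup E] [InnerProductSpace ℝ E]
    {s : Finset ι} {u : ι → E} (hu : ∀ i ∈ s, ‖u i‖ = 1) (hsum : ‖∑ i ∈ s, u i‖ = #s)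
    {i j : ι} (hi : i ∈ s) (hj : j ∈ s) : u i = u j := by
  set S := ∑ i ∈ s, u i
  have hle : ∀ k ∈ s, inner ℝ S (u k) ≤ ‖S‖ := fun k hk => by
    simpa [hu k hk] using real_inner_le_norm S (u k)
  -- Summing the Cauchy–Schwarz bounds gives `‖S‖ ^ 2 ≤ #s * ‖S‖`, which is an equality.
  have hsum_inner : ∑ k ∈ s, inner ℝ S (u k) = ∑ k ∈ s, ‖S‖ := by
    rw [← inner_sum, real_inner_self_eq_norm_sq, sum_const, nsmul_eq_mul, ← hsum, sq]
  have hS : ‖S‖ ≠ 0 := by rw [hsum]; exact_mod_cast (card_pos.mpr ⟨i, hi⟩).ne'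
  have hdir : ∀ k ∈ s, u k = ‖S‖⁻¹ • S := fun k hk => by
    have heq := (sum_eq_sum_iff_of_le hle).mp hsum_inner k hk
    rw [← mul_one ‖S‖, ← hu k hk, inner_eq_norm_mul_iff_real, hu k hk, one_smul] at heq
    rw [eq_inv_smul_iff₀ hS, ← heq]
  rw [hdir i hi, hdir j hj]

theorem Complex.norm_exp_two_pi_I_mul_ofReal (x : ℝ) : ‖exp (2 * π * I * x)‖ = 1 := by
  rw [show 2 * π * I * x = ((2 * π * x : ℝ) : ℂ) * I by push_cast; ring, norm_exp_ofReal_mul_I]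

theorem Complex.exp_two_pi_I_mul_ofReal_eq_one_iff (x : ℝ) :
    exp (2 * π * I * x) = 1 ↔ ∃ k : ℤ, x = k := by
  have h2piI : 2 * π * I ≠ 0 := by simp [pi_ne_zero, I_ne_zero]
  simp only [exp_eq_one_iff, mul_comm (2 * π * I), mul_left_inj' h2piI]
  exact_mod_cast Iff.rfl

theorem eq_zero_of_eq_intCast_of_abs_lt_one {x : ℝ} {k : ℤ} (hk : x = k) (hx : |x| < 1) :
    x = 0 := by
  rw [hk] at hx ⊢
  exact_mod_cast Int.abs_lt_one_iff.mp (by exact_mod_cast hx)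

/-- Uniqueness part of Theorem 1: if the normalized array gain with linear mismatch `α`
and quadratic mismatch `β` attains its peak value `1`, and the mismatches are small
enough to exclude modulo-one ambiguities, then `α = 0` and `β = 0`. -/
theorem array_gain_peak_unique (N : ℕ) (hN : 3 ≤ N) (α β : ℝ)
    (h1 : |α + β| < 1) (h2 : |β| < 1 / 2)
    (hG : (1 / (N : ℝ) ^ 2) *
        ‖∑ n ∈ Finset.range N,
          Complex.exp (2 * π * Complex.I *
            ((α * (n : ℝ) + β * (n : ℝ) ^ 2 : ℝ) : ℂ))‖ ^ 2 = 1) :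
    α = 0 ∧ β = 0 := by
  set u : ℕ → ℂ := fun n => exp (2 * π * I * ((α * (n : ℝ) + β * (n : ℝ) ^ 2 : ℝ) : ℂ))
  have hnorm : ‖∑ n ∈ range N, u n‖ = #(range N) := by
    rw [card_range]
    field_simp at hG
    nlinarith [norm_nonneg (∑ n ∈ range N, u n)]
  have hphase : ∀ n < N, ∃ k : ℤ, α * n + β * n ^ 2 = k := fun n hn => by
    rw [← exp_two_pi_I_mul_ofReal_eq_one_iff]
    have h0 : u 0 = 1 := by simp [u]
    rw [← h0]
    exact eq_of_norm_sum_eq_card (fun k _ => norm_exp_two_pi_I_mul_ofReal _) hnorm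
      (mem_range.mpr hn) (mem_range.mpr (by omega))
  obtain ⟨k₁, hk₁⟩ := hphase 1 (by omega)
  obtain ⟨k₂, hk₂⟩ := hphase 2 (by omega)
  have hβ : 2 * β = 0 := by
    refine eq_zero_of_eq_intCast_of_abs_lt_one (k := k₂ - 2 * k₁) ?_ ?_
    · push_cast at hk₁ hk₂ ⊢; linarith
    · rw [abs_mul, abs_two]; linarith
  have hα : α + β = 0 := eq_zero_of_eq_intCast_of_abs_lt_one (by simpa using hk₁) h1
  constructor <;> linarith
end
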